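/- For any m, n ≥ 1, the projection q : S^m × S^n → S^m ∧ S^n ≃ S^{m+n} collapsing the wedge S^m ∨ S^n induces the trivial homomorphism q_* : π_i(S^m × S^n) → π_i(S^{m+n}) for every i; that is, q ∈ 𝒵^∞(S^m × S^n, S^{m+n}). -/

import Mathlib

open scoped Manifold TensorProduct

noncomputable section

/-! ### Pointed spaces and based maps -/

/-- A pointed topological space. -/
structure PtSpace : Type 1 where
  /-- underlying type -/
  carrier : Type
  [top : TopologicalSpace carrier]
  /-- base point -/
  pt : carrier

attribute [instance] PtSpace.top

instance : CoeSort PtSpace Type := ⟨PtSpace.carrier⟩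

/-- The pointed space on a type with a chosen base point. -/
@[reducible] def PtSpace.of (G : Type) [TopologicalSpace G] (g : G) : PtSpace :=
  { carrier := G, pt := g }

/-- A based (pointed) continuous map. -/
@[ext] structure PtMap (X Y : PtSpace) where
  toCM : C(X, Y)
  map_pt : toCM X.pt = Y.pt

instance (X Y : PtSpace) : FunLike (PtMap X Y) X Y where
  coe f := f.toCM
  coe_injective f g h := by cases f; cases g; simp_all [ContinuousMap.ext_iff, funext_iff]

namespace PtMap

/-- identity -/
def id (X : PtSpace) : PtMap X X := ⟨ContinuousMap.id _, rfl⟩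

/-- composition of based maps -/
def comp {X Y Z : PtSpace} (g : PtMap Y Z) (f : PtMap X Y) : PtMap X Z :=
  ⟨g.toCM.comp f.toCM, by simp [f.map_pt, g.map_pt]⟩

/-- the constant based map -/
def const (X Y : PtSpace) : PtMap X Y := ⟨ContinuousMap.const _ Y.pt, rfl⟩

end PtMap

/-- Based homotopy: homotopy relative to the base point. -/
def PtHomotopic {X Y : PtSpace} (f g : PtMap X Y) : Prop :=
  ContinuousMap.HomotopicRel f.toCM g.toCM {X.pt}

theorem PtHomotopic.refl {X Y : PtSpace} (f : PtMap X Y) : PtHomotopic f f :=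
  ContinuousMap.HomotopicRel.refl _

theorem PtHomotopic.symm {X Y : PtSpace} {f g : PtMap X Y} (h : PtHomotopic f g) :
    PtHomotopic g f := ContinuousMap.HomotopicRel.symm h

theorem PtHomotopic.trans {X Y : PtSpace} {f g k : PtMap X Y} (h : PtHomotopic f g)
    (h' : PtHomotopic g k) : PtHomotopic f k := ContinuousMap.HomotopicRel.trans h h'

/-- A based map is nullhomotopic if it is based homotopic to the constant map. -/
def PtNullhomotopic {X Y : PtSpace} (f : PtMap X Y) : Prop :=
  PtHomotopic f (PtMap.const X Y)

/-- The `n`-sphere as a pointed space. -/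
def pSphere (n : ℕ) : PtSpace :=
  { carrier := Metric.sphere (0 : EuclideanSpace ℝ (Fin (n + 1))) 1
    pt := ⟨EuclideanSpace.single 0 1, by simp [EuclideanSpace.norm_single]⟩ }

/-! ### The semigroups `𝒵ⁿ(X,Y)` and their nilpotency -/

/-- `f ∈ 𝒵ⁿ(X, Y)` : `f` induces the trivial homomorphism on homotopy groups `π_i`
for all `1 ≤ i ≤ n`, expressed by the condition that `f ∘ g` is (based) nullhomotopic
for every based map `g : Sⁱ → X`. -/
def zClass (n : ℕ∞) {X Y : PtSpace} (f : PtMap X Y) : Prop :=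
  ∀ i : ℕ, 1 ≤ i → (i : ℕ∞) ≤ n → ∀ g : PtMap (pSphere i) X, PtNullhomotopic (f.comp g)

/-- The semigroup `𝒵ⁿ(X)` (as a set of based self-maps; the semigroup operation is
composition, which is compatible with `compList` below). -/
def ZSet (n : ℕ∞) (X : PtSpace) : Set (PtMap X X) := {f | zClass n f}

/-- iterated composite of a list of self-maps -/
def compList {X : PtSpace} : List (PtMap X X) → PtMap X X
  | [] => PtMap.id X
  | f :: l => f.comp (compList l)

/-- The set of `t ≥ 1` such that every composite of `t` elements of `𝒵ⁿ(X)` is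
nullhomotopic. -/
def nilSet (n : ℕ∞) (X : PtSpace) : Set ℕ :=
  {t | 1 ≤ t ∧ ∀ l : List (PtMap X X), l.length = t →
    (∀ f ∈ l, f ∈ ZSet n X) → PtNullhomotopic (compList l)}

/-- The nilpotency of the semigroup `𝒵ⁿ(X)`: the least `t ≥ 1` such that all composites
of `t` elements of `𝒵ⁿ(X)` are nullhomotopic (`⊤` if there is no such `t`).
`tNil n X` for `n = dim X` is `t(X)`, and `tNil ⊤ X` is `t_∞(X)`. -/
def tNil (n : ℕ∞) (X : PtSpace) : ℕ∞ :=
  sInf ((Nat.cast : ℕ → ℕ∞) '' nilSet n X)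

/-! ### Homotopy classes -/

/-- based homotopy as a setoid -/
def ptSetoid (X Y : PtSpace) : Setoid (PtMap X Y) where
  r := PtHomotopic
  iseqv := ⟨PtHomotopic.refl, PtHomotopic.symm, PtHomotopic.trans⟩

/-- `[X, Y]`, the set of based homotopy classes of based maps `X → Y`. -/
def PtCls (X Y : PtSpace) : Type := Quotient (ptSetoid X Y)

/-- the homotopy class of a based map -/
def PtMap.cls {X Y : PtSpace} (f : PtMap X Y) : PtCls X Y := Quotient.mk (ptSetoid X Y) f

/-- `𝒵ⁿ(X)` as a set of homotopy classes. -/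
def ZCls (n : ℕ∞) (X : PtSpace) : Set (PtCls X X) := PtMap.cls '' ZSet n X

/-- Right whiskering of a based homotopy. -/
theorem PtHomotopic.compRight {X Y Z : PtSpace} {f g : PtMap Y Z} (h : PtHomotopic f g)
    (q : PtMap X Y) : PtHomotopic (f.comp q) (g.comp q) := by
  obtain ⟨H⟩ := h
  exact ⟨{ toFun := fun p => H (p.1, q.toCM p.2)
           continuous_toFun := H.continuous.comp
             (continuous_fst.prodMk (q.toCM.continuous.comp continuous_snd))
           map_zero_left := fun x => by simp [PtMap.comp]
           map_one_left := fun x => by simp [PtMap.comp]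
           prop' := fun t x hx => by
             have hx' : x = X.pt := hx
             subst hx'
             show H (t, q.toCM X.pt) = (f.comp q).toCM X.pt
             rw [q.map_pt]
             show H (t, Y.pt) = f.toCM (q.toCM X.pt)
             rw [q.map_pt]
             exact H.eq_fst t rfl }⟩

/-- Left whiskering of a based homotopy. -/
theorem PtHomotopic.compLeft {X Y Z : PtSpace} {f g : PtMap X Y} (h : PtHomotopic f g)
    (p : PtMap Y Z) : PtHomotopic (p.comp f) (p.comp g) :=
  h.map fun H => H.compContinuousMap p.toCM

/-- precomposition on homotopy classes, `q^* : [Y, Z] → [X, Z]` -/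
def PtCls.precomp {X Y : PtSpace} (q : PtMap X Y) {Z : PtSpace} :
    PtCls Y Z → PtCls X Z :=
  Quotient.map (fun f => f.comp q) (fun _ _ h => h.compRight q)

/-- postcomposition on homotopy classes, `p_* : [X, Y] → [X, Z]` -/
def PtCls.postcomp {Y Z : PtSpace} (p : PtMap Y Z) {X : PtSpace} :
    PtCls X Y → PtCls X Z :=
  Quotient.map (fun f => p.comp f) (fun _ _ h => h.compLeft p)


/-! ### Further constructions on pointed spaces -/

/-- product of pointed spaces -/
def PtSpace.prod (X Y : PtSpace) : PtSpace :=
  { carrier := X.carrier × Y.carrier, pt := (X.pt, Y.pt) }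

/-- the space obtained from `X` by collapsing a subset `A` to a point -/
def PtSpace.collapse (X : PtSpace) (A : Set X.carrier) : PtSpace :=
  { carrier := Quot (fun a b : X.carrier => a ∈ A ∧ b ∈ A)
    pt := Quot.mk _ X.pt }

/-- the collapsing map `X → X/A` -/
def PtSpace.collapseMap (X : PtSpace) (A : Set X.carrier) : PtMap X (X.collapse A) :=
  ⟨⟨Quot.mk _, continuous_quot_mk⟩, rfl⟩

/-- the wedge `X ∨ Y` -/
def ptWedge (X Y : PtSpace) : PtSpace :=
  { carrier := Quot (fun a b : X.carrier ⊕ Y.carrier =>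
      (a = Sum.inl X.pt ∨ a = Sum.inr Y.pt) ∧ (b = Sum.inl X.pt ∨ b = Sum.inr Y.pt))
    pt := Quot.mk _ (Sum.inl X.pt) }

/-- projection of the wedge onto its first factor -/
def ptWedgeProjLeft (X Y : PtSpace) : PtMap (ptWedge X Y) X :=
  ⟨⟨Quot.lift (Sum.elim id fun _ => X.pt) (by
      rintro a b ⟨ha, hb⟩
      rcases ha with rfl | rfl <;> rcases hb with rfl | rfl <;> rfl),
    continuous_quot_lift _ (Continuous.sumElim continuous_id continuous_const)⟩, rfl⟩

/-- the smash product `X ∧ Y`, the quotient of `X × Y` by the wedge -/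
def ptSmash (X Y : PtSpace) : PtSpace :=
  { carrier := Quot (fun a b : X.carrier × Y.carrier =>
      (a.1 = X.pt ∨ a.2 = Y.pt) ∧ (b.1 = X.pt ∨ b.2 = Y.pt))
    pt := Quot.mk _ (X.pt, Y.pt) }

/-- the projection `X × Y → X ∧ Y` -/
def ptSmashProj (X Y : PtSpace) : PtMap (X.prod Y) (ptSmash X Y) :=
  ⟨⟨Quot.mk _, continuous_quot_mk⟩, rfl⟩

/-- the reduced suspension `ΣX` -/
def ptSusp (X : PtSpace) : PtSpace :=
  { carrier := Quot (fun a b : X.carrier × unitInterval =>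
      (a.2 = 0 ∨ a.2 = 1 ∨ a.1 = X.pt) ∧ (b.2 = 0 ∨ b.2 = 1 ∨ b.1 = X.pt))
    pt := Quot.mk _ (X.pt, 0) }

/-- the reduced mapping cone of `f : A → B` -/
def ptCone {A B : PtSpace} (f : PtMap A B) : PtSpace :=
  { carrier := Quot (fun x y : (A.carrier × unitInterval) ⊕ B.carrier =>
      (∃ a : A.carrier, x = Sum.inl (a, 1) ∧ y = Sum.inr (f.toCM a)) ∨
      ((∃ a t, x = Sum.inl (a, t) ∧ (t = 0 ∨ a = A.pt)) ∧
        ∃ a t, y = Sum.inl (a, t) ∧ (t = 0 ∨ a = A.pt)))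
    pt := Quot.mk _ (Sum.inr B.pt) }

/-- `f : X → Y` is a based homotopy equivalence -/
def IsPtHomotopyEquiv {X Y : PtSpace} (f : PtMap X Y) : Prop :=
  ∃ g : PtMap Y X, PtHomotopic (g.comp f) (PtMap.id X) ∧ PtHomotopic (f.comp g) (PtMap.id Y)

/-- `X` and `Y` are based homotopy equivalent -/
def PtHomotopyEquiv (X Y : PtSpace) : Prop :=
  ∃ f : PtMap X Y, IsPtHomotopyEquiv f

/-! ### Pointwise group structure on `[X, G]` for a topological group `G` -/

section PtGrp

variable {X : PtSpace} {G : Type} [TopologicalSpace G] [Group G] [IsTopologicalGroup G]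

/-- pointwise product of based maps into a topological group (based at the identity) -/
def PtMap.mul (f g : PtMap X (PtSpace.of G 1)) : PtMap X (PtSpace.of G 1) :=
  ⟨⟨fun x => f.toCM x * g.toCM x, f.toCM.continuous.mul g.toCM.continuous⟩, by
    show f.toCM X.pt * g.toCM X.pt = 1
    rw [f.map_pt, g.map_pt]; exact mul_one 1⟩

/-- pointwise inverse -/
def PtMap.inv (f : PtMap X (PtSpace.of G 1)) : PtMap X (PtSpace.of G 1) :=
  ⟨⟨fun x => (f.toCM x)⁻¹, f.toCM.continuous.inv⟩, by
    show (f.toCM X.pt)⁻¹ = 1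
    rw [f.map_pt]; exact inv_one⟩

/-- pointwise power -/
def PtMap.npow (f : PtMap X (PtSpace.of G 1)) (k : ℕ) : PtMap X (PtSpace.of G 1) :=
  ⟨⟨fun x => (f.toCM x) ^ k, f.toCM.continuous.pow k⟩, by
    show (f.toCM X.pt) ^ k = 1
    rw [f.map_pt]; exact one_pow k⟩

theorem PtHomotopic.mul {f f' g g' : PtMap X (PtSpace.of G 1)} (h₁ : PtHomotopic f f')
    (h₂ : PtHomotopic g g') : PtHomotopic (f.mul g) (f'.mul g') := by
  obtain ⟨H₁⟩ := h₁; obtain ⟨H₂⟩ := h₂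
  exact ⟨{ toFun := fun p => H₁ p * H₂ p
           continuous_toFun := H₁.continuous.mul H₂.continuous
           map_zero_left := fun x => by simp [PtMap.mul]
           map_one_left := fun x => by simp [PtMap.mul]
           prop' := fun t x hx => by
             have hx' : x = X.pt := hx
             subst hx'
             show H₁ (t, X.pt) * H₂ (t, X.pt) = (f.mul g).toCM X.pt
             rw [H₁.eq_fst t rfl, H₂.eq_fst t rfl]; rfl }⟩

theorem PtHomotopic.inv {f f' : PtMap X (PtSpace.of G 1)} (h : PtHomotopic f f') :
    PtHomotopic f.inv f'.inv := by
  obtain ⟨H⟩ := h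
  exact ⟨{ toFun := fun p => (H p)⁻¹
           continuous_toFun := H.continuous.inv
           map_zero_left := fun x => by simp [PtMap.inv]
           map_one_left := fun x => by simp [PtMap.inv]
           prop' := fun t x hx => by
             have hx' : x = X.pt := hx
             subst hx'
             show (H (t, X.pt))⁻¹ = f.inv.toCM X.pt
             rw [H.eq_fst t rfl]; rfl }⟩

instance : Mul (PtCls X (PtSpace.of G 1)) :=
  ⟨Quotient.map₂ PtMap.mul fun _ _ h₁ _ _ h₂ => h₁.mul h₂⟩

instance : One (PtCls X (PtSpace.of G 1)) := ⟨(PtMap.const X (PtSpace.of G 1)).cls⟩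

instance : Inv (PtCls X (PtSpace.of G 1)) :=
  ⟨Quotient.map PtMap.inv fun _ _ h => h.inv⟩

/-- `[X, G]` is a group under pointwise multiplication. -/
instance : Group (PtCls X (PtSpace.of G 1)) where
  mul_assoc a b c := by
    induction a using Quotient.inductionOn with | _ a =>
    induction b using Quotient.inductionOn with | _ b =>
    induction c using Quotient.inductionOn with | _ c =>
    exact congrArg (Quotient.mk _) (by
      apply PtMap.ext; exact ContinuousMap.ext fun x => mul_assoc _ _ _)
  one_mul a := by
    induction a using Quotient.inductionOn with | _ a =>
    exact congrArg (Quotient.mk _) (by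
      apply PtMap.ext; exact ContinuousMap.ext fun x => one_mul _)
  mul_one a := by
    induction a using Quotient.inductionOn with | _ a =>
    exact congrArg (Quotient.mk _) (by
      apply PtMap.ext; exact ContinuousMap.ext fun x => mul_one _)
  inv_mul_cancel a := by
    induction a using Quotient.inductionOn with | _ a =>
    exact congrArg (Quotient.mk _) (by
      apply PtMap.ext; exact ContinuousMap.ext fun x => inv_mul_cancel _)

end PtGrp

/-! ### Finite CW structures -/

/-- A finite CW presentation of a space: finitely many cells with characteristic maps,
whose open cells partition the space, each cell boundary landing in cells of strictly
smaller dimension. Together with compactness and Hausdorffness (see `IsFiniteCW`)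
this is exactly the classical notion of a finite CW complex. -/
structure FiniteCWPres (X : PtSpace) where
  ι : Type
  [fin : Finite ι]
  cdim : ι → ℕ
  char : ∀ j, C(Metric.closedBall (0 : EuclideanSpace ℝ (Fin (cdim j))) 1, X.carrier)
  injOn : ∀ j, Set.InjOn (char j) {v | ‖(v : EuclideanSpace ℝ (Fin (cdim j)))‖ < 1}
  disjoint : ∀ j k, j ≠ k → Disjoint
    (char j '' {v | ‖(v : EuclideanSpace ℝ (Fin (cdim j)))‖ < 1})
    (char k '' {v | ‖(v : EuclideanSpace ℝ (Fin (cdim k)))‖ < 1})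
  cover : ∀ x : X.carrier, ∃ j, ∃ v : Metric.closedBall (0 : EuclideanSpace ℝ (Fin (cdim j))) 1,
    ‖(v : EuclideanSpace ℝ (Fin (cdim j)))‖ < 1 ∧ char j v = x
  boundary : ∀ j, ∀ v : Metric.closedBall (0 : EuclideanSpace ℝ (Fin (cdim j))) 1,
    ‖(v : EuclideanSpace ℝ (Fin (cdim j)))‖ = 1 →
    ∃ k, ∃ w : Metric.closedBall (0 : EuclideanSpace ℝ (Fin (cdim k))) 1,
      cdim k < cdim j ∧ ‖(w : EuclideanSpace ℝ (Fin (cdim k)))‖ < 1 ∧ char k w = char j v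

/-- `X` is a finite CW complex of dimension `d`. -/
def IsFiniteCW (X : PtSpace) (d : ℕ) : Prop :=
  CompactSpace X.carrier ∧ T2Space X.carrier ∧
    ∃ P : FiniteCWPres X, (∀ j, P.cdim j ≤ d) ∧ ∃ j, P.cdim j = d

/-! ### Nilpotent spaces -/

/-- Two homotopy classes in `π_n(X, x)` are freely related if they have representatives
that are freely homotopic (i.e. homotopic through maps collapsing the cube boundary to a
single, possibly moving, point).  This holds for `a` and `b` iff `b = γ · a` for some `γ`
in the fundamental group, so it encodes the orbits of the `π₁`-action on `π_n`. -/
def FreelyRelated (n : ℕ) (X : Type) [TopologicalSpace X] (x : X)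
    (A B : HomotopyGroup (Fin n) X x) : Prop :=
  ∃ p q : GenLoop (Fin n) X x,
    Quotient.mk (GenLoop.Homotopic.setoid (Fin n) x) p = A ∧
    Quotient.mk (GenLoop.Homotopic.setoid (Fin n) x) q = B ∧
    ∃ H : ContinuousMap.Homotopy p.1 q.1,
      ∀ (t : unitInterval) y z, y ∈ Cube.boundary (Fin n) → z ∈ Cube.boundary (Fin n) →
        H (t, y) = H (t, z)

/-- The lower central series of the action of the fundamental group on `π_{n+2}(X, x)`:
`Γ⁰ = π_{n+2}` and `Γ^{k+1}` is generated by the elements `(γ · a) * a⁻¹` with `a ∈ Γᵏ`. -/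
def actionLowerCentralSeries (n : ℕ) (X : Type) [TopologicalSpace X] (x : X) :
    ℕ → Subgroup (HomotopyGroup (Fin (n + 2)) X x)
  | 0 => ⊤
  | k + 1 => Subgroup.closure
      {g | ∃ a b, a ∈ actionLowerCentralSeries n X x k ∧ FreelyRelated (n + 2) X x a b ∧
        g = b * a⁻¹}

/-- A nilpotent space: path-connected, with nilpotent fundamental group acting
nilpotently on all higher homotopy groups. -/
def IsNilpotentSpace (X : PtSpace) : Prop :=
  PathConnectedSpace X.carrier ∧
  Group.IsNilpotent (FundamentalGroup X.carrier X.pt) ∧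
  ∀ n : ℕ, ∃ k, actionLowerCentralSeries n X.carrier X.pt k = ⊥

/-! ### Localization of spaces -/

/-- All homotopy groups of `Z` are `P`-local (`P` a set of primes): for every prime
`q ∉ P` the `q`-th power map on `π_n(Z)` is bijective. -/
def IsPLocalSpace (P : Set ℕ) (Z : PtSpace) : Prop :=
  ∀ n : ℕ, ∀ q : ℕ, q.Prime → q ∉ P →
    Function.Bijective fun g : HomotopyGroup (Fin (n + 1)) Z.carrier Z.pt => g ^ q

/-- `e : X → Y` is a `P`-localization of `X` (`P` a set of primes): `Y` is `P`-local and
`e` is universal (up to homotopy) among based maps to `P`-local spaces.  For `P = {p}`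
this is localization at the prime `p`; for `P = ∅` it is rationalization. -/
def IsPLocalization (P : Set ℕ) {X Y : PtSpace} (e : PtMap X Y) : Prop :=
  IsPLocalSpace P Y ∧
  ∀ Z : PtSpace, IsPLocalSpace P Z →
    (∀ g : PtMap X Z, ∃ h : PtMap Y Z, PtHomotopic (h.comp e) g) ∧
    ∀ h h' : PtMap Y Z, PtHomotopic (h.comp e) (h'.comp e) → PtHomotopic h h'

/-! ### Misc notions -/

/-- `G` contains a torus of dimension `k` (a continuously and injectively embedded copy
of `(ℝ/ℤ)ᵏ`).  For a compact Lie group, the rank is the largest such `k`. -/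
def HasTorus (G : Type) [TopologicalSpace G] [Group G] (k : ℕ) : Prop :=
  ∃ f : (Fin k → AddCircle (1 : ℝ)) → G,
    Continuous f ∧ Function.Injective f ∧ ∀ a b, f (a + b) = f a * f b

/-- `q : G → Sᴺ` is the pinch map onto the top cell: it collapses a proper closed subset
`C` (the lower skeleton) containing the base point to the base point of the sphere and is
injective on the complement, an open `N`-cell, which maps onto the complement of the base
point. -/
def IsCellPinch {G : PtSpace} {N : ℕ} (q : PtMap G (pSphere N)) : Prop :=
  Topology.IsQuotientMap q.toCM ∧
  ∃ C : Set G.carrier, IsClosed C ∧ G.pt ∈ C ∧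
    (∀ x ∈ C, q.toCM x = (pSphere N).pt) ∧
    Set.InjOn q.toCM Cᶜ ∧
    (∀ x ∈ Cᶜ, q.toCM x ≠ (pSphere N).pt) ∧
    Nonempty (Homeomorph (↥(Cᶜ)) (↥(Metric.ball (0 : EuclideanSpace ℝ (Fin N)) 1)))

/-- the total dimension of the rational homotopy of `X` (for a `1`-connected finite
`H`-space this is its rank) -/
def ratHomotopyRank (X : PtSpace) : ℕ :=
  ∑ᶠ n : ℕ,
    Module.finrank ℚ
      (ℚ ⊗[ℤ] Additive (HomotopyGroup (Fin (n + 2)) X.carrier X.pt))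

/-- `E` is an Eilenberg–MacLane space `K(ℚ, m)` (`m ≥ 1`): path-connected, `π_m(E) ≅ ℚ`
and all other homotopy groups vanish. -/
def IsEMRat (E : PtSpace) (m : ℕ) : Prop :=
  1 ≤ m ∧
  (∀ i : ℕ, 1 ≤ i → i ≠ m → ∀ g : PtMap (pSphere i) E, PtNullhomotopic g) ∧
  PathConnectedSpace E.carrier ∧
  Nonempty (HomotopyGroup (Fin (m - 1 + 1)) E.carrier E.pt ≃* Multiplicative ℚ)

/-! Every sphere `Sⁱ`, `i ≥ 1`, is (weakly) a co-H-space: its diagonal deforms into the wedge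
`Sⁱ ∨ Sⁱ ⊆ Sⁱ × Sⁱ`. Writing a based map `g : Sⁱ → Sᵐ × Sⁿ` as `(g₁ × g₂) ∘ Δ`, this deforms
`q ∘ g` into `q ∘ (g₁ × g₂)` on the wedge, which is constant since `g₁ × g₂` maps `Sⁱ ∨ Sⁱ` into
`Sᵐ ∨ Sⁿ`. The deformation of the diagonal: the first coordinate pushes the hemisphere
`⟪x, p⟫ ≥ 0` to the base point `p`, the second pushes the opposite hemisphere to `-p` while
rotating `-p` to `p`. -/

open scoped RealInnerProductSpace
open NormedSpace (normalize)

section SphereGeometry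

variable {E : Type*} [NormedAddCommGroup E] [InnerProductSpace ℝ E]

def reflectOrth (u v : E) : E := v - (2 * ⟪v, u⟫) • u

theorem norm_reflectOrth {u : E} (hu : ‖u‖ = 1) (v : E) : ‖reflectOrth u v‖ = ‖v‖ := by
  refine (sq_eq_sq₀ (norm_nonneg _) (norm_nonneg _)).1 ?_
  rw [reflectOrth, norm_sub_sq_real, real_inner_smul_right, norm_smul, Real.norm_eq_abs, hu,
    mul_pow, sq_abs]
  ring

theorem reflectOrth_reflectOrth {u : E} (hu : ‖u‖ = 1) (v : E) :
    reflectOrth u (reflectOrth u v) = v := by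
  have : ⟪reflectOrth u v, u⟫ = -⟪v, u⟫ := by
    rw [reflectOrth, inner_sub_left, real_inner_smul_left, real_inner_self_eq_norm_sq, hu]
    ring
  rw [reflectOrth, this, reflectOrth]
  module

theorem reflectOrth_neg_self {u : E} (hu : ‖u‖ = 1) : reflectOrth u (-u) = u := by
  rw [reflectOrth, inner_neg_left, real_inner_self_eq_norm_sq, hu]
  module

theorem reflectOrth_of_inner_eq_zero {u v : E} (h : ⟪v, u⟫ = 0) : reflectOrth u v = v := by
  simp [reflectOrth, h]

theorem Continuous.reflectOrth {X : Type*} [TopologicalSpace X] {u v : X → E}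
    (hu : Continuous u) (hv : Continuous v) : Continuous fun x => reflectOrth (u x) (v x) :=
  hv.sub ((continuous_const.mul (hv.inner hu)).smul hu)

theorem Continuous.normalize {X : Type*} [TopologicalSpace X] {f : X → E}
    (hf : Continuous f) (h : ∀ x, f x ≠ 0) : Continuous fun x => normalize (f x) :=
  (hf.norm.inv₀ fun x => norm_ne_zero_iff.2 (h x)).smul hf

def quarterTurn (p q : E) (s : ℝ) : E :=
  Real.cos (Real.pi / 2 * s) • p + Real.sin (Real.pi / 2 * s) • q

theorem norm_quarterTurn {p q : E} (hp : ‖p‖ = 1) (hq : ‖q‖ = 1) (hpq : ⟪p, q⟫ = 0) (s : ℝ) :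
    ‖quarterTurn p q s‖ = 1 := by
  have horth : ⟪Real.cos (Real.pi / 2 * s) • p, Real.sin (Real.pi / 2 * s) • q⟫ = 0 := by
    simp [real_inner_smul_left, real_inner_smul_right, hpq]
  refine (sq_eq_sq₀ (norm_nonneg _) zero_le_one).1 ?_
  rw [quarterTurn, sq, norm_add_sq_eq_norm_sq_add_norm_sq_real horth]
  simp [norm_smul, hp, hq, Real.cos_sq_add_sin_sq, ← sq]

theorem quarterTurn_zero (p q : E) : quarterTurn p q 0 = p := by simp [quarterTurn]

theorem quarterTurn_one (p q : E) : quarterTurn p q 1 = q := by simp [quarterTurn]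

theorem Continuous.quarterTurn (p q : E) {X : Type*} [TopologicalSpace X] {s : X → ℝ}
    (hs : Continuous s) : Continuous fun x => _root_.quarterTurn p q (s x) := by
  unfold _root_.quarterTurn
  fun_prop

def pushWeight (t : ℝ) : ℝ := min 1 (max 0 (2 * t + 1))

theorem pushWeight_of_nonneg {t : ℝ} (ht : 0 ≤ t) : pushWeight t = 1 := by
  rw [pushWeight, max_eq_right (by linarith), min_eq_left (by linarith)]

theorem neg_half_lt_of_pushWeight_ne_zero {t : ℝ} (ht : pushWeight t ≠ 0) : -(1 / 2) < t := by
  by_contra! h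
  exact ht (by rw [pushWeight, max_eq_left (by linarith), min_eq_right zero_le_one])

@[fun_prop] theorem continuous_pushWeight : Continuous pushWeight := by
  unfold pushWeight; fun_prop

theorem one_sub_smul_add_smul_ne_zero {x u : E} (hx : ‖x‖ = 1) (hu : ‖u‖ = 1)
    (h : -1 < ⟪x, u⟫) (a : ℝ) : (1 - a) • x + a • u ≠ 0 := by
  intro h0
  have : ⟪(1 - a) • x + a • u, x + u⟫ = 1 + ⟪x, u⟫ := by
    simp only [inner_add_left, inner_add_right, real_inner_smul_left,
      real_inner_self_eq_norm_sq, hx, hu, real_inner_comm x u]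
    ring
  rw [h0, inner_zero_left] at this
  linarith

/-- At time `1` this collapses the closed hemisphere centred at `u` to `u`. The weight vanishes
near `-u`, so the segment from `x` towards `u` never passes through `0`. -/
def hemispherePush (u : E) (s : ℝ) (x : E) : E :=
  normalize ((1 - s * pushWeight ⟪x, u⟫) • x + (s * pushWeight ⟪x, u⟫) • u)

theorem hemispherePush_arg_ne_zero {x u : E} (hx : ‖x‖ = 1) (hu : ‖u‖ = 1) (s : ℝ) :
    (1 - s * pushWeight ⟪x, u⟫) • x + (s * pushWeight ⟪x, u⟫) • u ≠ 0 := by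
  by_cases hw : pushWeight ⟪x, u⟫ = 0
  · simpa [hw] using norm_ne_zero_iff.1 (hx ▸ one_ne_zero)
  · exact one_sub_smul_add_smul_ne_zero hx hu
      (by linarith [neg_half_lt_of_pushWeight_ne_zero hw]) _

theorem norm_hemispherePush {x u : E} (hx : ‖x‖ = 1) (hu : ‖u‖ = 1) (s : ℝ) :
    ‖hemispherePush u s x‖ = 1 :=
  NormedSpace.norm_normalize_eq_one_iff.2 (hemispherePush_arg_ne_zero hx hu s)

theorem hemispherePush_zero {x : E} (hx : ‖x‖ = 1) (u : E) : hemispherePush u 0 x = x := by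
  simp [hemispherePush, NormedSpace.normalize_eq_self_of_norm_eq_one hx]

theorem hemispherePush_one {x u : E} (hu : ‖u‖ = 1) (h : 0 ≤ ⟪x, u⟫) :
    hemispherePush u 1 x = u := by
  simp [hemispherePush, pushWeight_of_nonneg h, NormedSpace.normalize_eq_self_of_norm_eq_one hu]

theorem hemispherePush_self {u : E} (hu : ‖u‖ = 1) (s : ℝ) : hemispherePush u s u = u := by
  have h : pushWeight ⟪u, u⟫ = 1 := pushWeight_of_nonneg real_inner_self_nonneg
  rw [hemispherePush, h, mul_one, ← add_smul, sub_add_cancel, one_smul,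
    NormedSpace.normalize_eq_self_of_norm_eq_one hu]

theorem Continuous.hemispherePush {X : Type*} [TopologicalSpace X] {u : E} (hu : ‖u‖ = 1)
    {s : X → ℝ} {x : X → E} (hs : Continuous s) (hx : Continuous x) (hx1 : ∀ z, ‖x z‖ = 1) :
    Continuous fun z => _root_.hemispherePush u (s z) (x z) :=
  Continuous.normalize (by fun_prop) fun z => hemispherePush_arg_ne_zero (hx1 z) hu (s z)

/-- Collapses the hemisphere centred at `-p` to `-p` while rotating in the `p`,`q`-plane, by
two reflections, so that `-p` ends at `p`. -/
def hemispherePushTurn (p q : E) (s : ℝ) (x : E) : E :=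
  reflectOrth (quarterTurn p q s) (reflectOrth p (hemispherePush (-p) s x))

variable {p q : E}

theorem norm_hemispherePushTurn (hp : ‖p‖ = 1) (hq : ‖q‖ = 1) (hpq : ⟪p, q⟫ = 0) {x : E}
    (hx : ‖x‖ = 1) (s : ℝ) : ‖hemispherePushTurn p q s x‖ = 1 := by
  rw [hemispherePushTurn, norm_reflectOrth (norm_quarterTurn hp hq hpq s), norm_reflectOrth hp,
    norm_hemispherePush hx (by rwa [norm_neg])]

theorem hemispherePushTurn_zero (hp : ‖p‖ = 1) {x : E} (hx : ‖x‖ = 1) :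
    hemispherePushTurn p q 0 x = x := by
  rw [hemispherePushTurn, quarterTurn_zero, hemispherePush_zero hx, reflectOrth_reflectOrth hp]

theorem hemispherePushTurn_one (hp : ‖p‖ = 1) (hpq : ⟪p, q⟫ = 0) {x : E} (h : ⟪x, p⟫ ≤ 0) :
    hemispherePushTurn p q 1 x = p := by
  rw [hemispherePushTurn, quarterTurn_one, hemispherePush_one (by rwa [norm_neg])
    (by rwa [inner_neg_right, neg_nonneg]), reflectOrth_neg_self hp,
    reflectOrth_of_inner_eq_zero hpq]

theorem Continuous.hemispherePushTurn (hp : ‖p‖ = 1) (q : E) {X : Type*} [TopologicalSpace X]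
    {s : X → ℝ} {x : X → E} (hs : Continuous s) (hx : Continuous x) (hx1 : ∀ z, ‖x z‖ = 1) :
    Continuous fun z => _root_.hemispherePushTurn p q (s z) (x z) :=
  (hs.quarterTurn p q).reflectOrth
    (continuous_const.reflectOrth (hs.hemispherePush (by rwa [norm_neg]) hx hx1))

end SphereGeometry

def PtSpace.wedgeInProd (X Y : PtSpace) : Set (X.carrier × Y.carrier) :=
  {z | z.1 = X.pt ∨ z.2 = Y.pt}

theorem ptSmashProj_of_mem_wedgeInProd {X Y : PtSpace} {z : X.carrier × Y.carrier}
    (hz : z ∈ X.wedgeInProd Y) : (ptSmashProj X Y).toCM z = (ptSmash X Y).pt :=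
  Quot.sound ⟨hz, Or.inl rfl⟩

theorem PtMap.prodMap_mem_wedgeInProd {Z W X Y : PtSpace} (f : PtMap Z X) (g : PtMap W Y)
    {z : Z.carrier × W.carrier} (hz : z ∈ Z.wedgeInProd W) :
    (f.toCM z.1, g.toCM z.2) ∈ X.wedgeInProd Y := by
  rcases hz with h | h
  · exact Or.inl (h ▸ f.map_pt)
  · exact Or.inr (h ▸ g.map_pt)

def PtMap.fst (X Y : PtSpace) : PtMap (X.prod Y) X := ⟨ContinuousMap.fst, rfl⟩

def PtMap.snd (X Y : PtSpace) : PtMap (X.prod Y) Y := ⟨ContinuousMap.snd, rfl⟩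

theorem PtMap.comp_const {X Y Z : PtSpace} (f : PtMap Y Z) :
    f.comp (PtMap.const X Y) = PtMap.const X Z :=
  PtMap.ext (ContinuousMap.ext fun _ => f.map_pt)

theorem PtNullhomotopic.comp_left {X Y Z : PtSpace} {f : PtMap X Y} (hf : PtNullhomotopic f)
    (g : PtMap Y Z) : PtNullhomotopic (g.comp f) := by
  unfold PtNullhomotopic
  rw [← g.comp_const]
  exact hf.compLeft g

/-- A weak form of being a co-H-space: the base point need only stay in the wedge, which suffices
since the smash product collapses all of it. -/
def PtSpace.DiagonalDeformsIntoWedge (Z : PtSpace) : Prop :=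
  ∃ H : C(unitInterval × Z.carrier, Z.carrier × Z.carrier), (∀ z, H (0, z) = (z, z)) ∧
    (∀ t, H (t, Z.pt) ∈ Z.wedgeInProd Z) ∧ ∀ z, H (1, z) ∈ Z.wedgeInProd Z

theorem PtSpace.DiagonalDeformsIntoWedge.smashProj_comp_nullhomotopic {Z X Y : PtSpace}
    (hZ : Z.DiagonalDeformsIntoWedge) (g : PtMap Z (X.prod Y)) :
    PtNullhomotopic ((ptSmashProj X Y).comp g) := by
  obtain ⟨H, h0, hpt, h1⟩ := hZ
  let φ : C(Z.carrier × Z.carrier, (ptSmash X Y).carrier) :=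
    (ptSmashProj X Y).toCM.comp
      (((PtMap.fst X Y).comp g).toCM.prodMap ((PtMap.snd X Y).comp g).toCM)
  have hφ : ∀ z ∈ Z.wedgeInProd Z, φ z = (ptSmash X Y).pt := fun z hz =>
    ptSmashProj_of_mem_wedgeInProd (PtMap.prodMap_mem_wedgeInProd _ _ hz)
  exact ⟨{ toContinuousMap := φ.comp H
           map_zero_left := fun z => by
             show φ (H (0, z)) = _
             rw [h0]
             rfl
           map_one_left := fun z => hφ _ (h1 z)
           prop' := fun t z hz => by
             rw [Set.mem_singleton_iff.1 hz]
             exact (hφ _ (hpt t)).trans ((ptSmashProj X Y).comp g).map_pt.symm }⟩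

theorem sphere_diagonalDeformsIntoWedge {E : Type} [NormedAddCommGroup E]
    [InnerProductSpace ℝ E] (p : Metric.sphere (0 : E) 1) {q : E} (hq : ‖q‖ = 1)
    (hpq : ⟪(p : E), q⟫ = 0) :
    (PtSpace.of (Metric.sphere (0 : E) 1) p).DiagonalDeformsIntoWedge := by
  have hS : ∀ x : Metric.sphere (0 : E) 1, ‖(x : E)‖ = 1 := norm_eq_of_mem_sphere
  have hp := hS p
  let A : unitInterval × Metric.sphere (0 : E) 1 → Metric.sphere (0 : E) 1 := fun z =>
    ⟨hemispherePush p z.1 z.2, mem_sphere_zero_iff_norm.2 (norm_hemispherePush (hS _) hp _)⟩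
  let B : unitInterval × Metric.sphere (0 : E) 1 → Metric.sphere (0 : E) 1 := fun z =>
    ⟨hemispherePushTurn p q z.1 z.2,
      mem_sphere_zero_iff_norm.2 (norm_hemispherePushTurn hp hq hpq (hS _) _)⟩
  have hs : Continuous fun z : unitInterval × Metric.sphere (0 : E) 1 => (z.1 : ℝ) := by fun_prop
  have hx : Continuous fun z : unitInterval × Metric.sphere (0 : E) 1 => (z.2 : E) := by fun_prop
  refine ⟨⟨fun z => (A z, B z), ?_⟩, fun x => ?_, fun t => ?_, fun x => ?_⟩
  · exact ((hs.hemispherePush hp hx fun z => hS z.2).subtype_mk _).prodMk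
      ((hs.hemispherePushTurn hp q hx fun z => hS z.2).subtype_mk _)
  · exact Prod.ext (Subtype.ext (hemispherePush_zero (hS x) _))
      (Subtype.ext (hemispherePushTurn_zero hp (hS x)))
  · exact Or.inl (Subtype.ext (hemispherePush_self hp _))
  · rcases le_total 0 ⟪(x : E), p⟫ with h | h
    · exact Or.inl (Subtype.ext (hemispherePush_one hp h))
    · exact Or.inr (Subtype.ext (hemispherePushTurn_one hp hpq h))

theorem pSphere_diagonalDeformsIntoWedge {i : ℕ} (hi : 1 ≤ i) :
    (pSphere i).DiagonalDeformsIntoWedge := by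
  refine sphere_diagonalDeformsIntoWedge _ (q := EuclideanSpace.single (Fin.last i) 1)
    (by simp) ?_
  have : (0 : Fin (i + 1)) ≠ Fin.last i :=
    Fin.ne_of_val_ne (by rw [Fin.val_zero, Fin.val_last]; omega)
  simp [EuclideanSpace.inner_single_left, this]

theorem stmt_13_general (m n : ℕ)
    (e : (ptSmash (pSphere m) (pSphere n)).carrier ≃ₜ (pSphere (m + n)).carrier)
    (he : e (ptSmash (pSphere m) (pSphere n)).pt = (pSphere (m + n)).pt) :
    zClass ⊤ (X := PtSpace.prod (pSphere m) (pSphere n)) (Y := pSphere (m + n))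
      ⟨(⟨e, e.continuous⟩ :
          C((ptSmash (pSphere m) (pSphere n)).carrier, (pSphere (m + n)).carrier)).comp
        (ptSmashProj (pSphere m) (pSphere n)).toCM, he⟩ := by
  intro i hi _ g
  exact ((pSphere_diagonalDeformsIntoWedge hi).smashProj_comp_nullhomotopic g).comp_left
    ⟨⟨e, e.continuous⟩, he⟩

theorem stmt_13 (m n : ℕ) (hm : 1 ≤ m) (hn : 1 ≤ n)
    (e : (ptSmash (pSphere m) (pSphere n)).carrier ≃ₜ (pSphere (m + n)).carrier)
    (he : e (ptSmash (pSphere m) (pSphere n)).pt = (pSphere (m + n)).pt) :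
    zClass ⊤ (X := PtSpace.prod (pSphere m) (pSphere n)) (Y := pSphere (m + n))
      ⟨(⟨e, e.continuous⟩ :
          C((ptSmash (pSphere m) (pSphere n)).carrier, (pSphere (m + n)).carrier)).comp
        (ptSmashProj (pSphere m) (pSphere n)).toCM, he⟩ :=
  stmt_13_general m n e he

end
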